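/- arXiv:2112.02880 — 2 statements merged into one kernel-verified Lean document; each statement's English description precedes it below -/
import Mathlib

section
/- Let μ > 0, α ∈ (0,1), and θ ∈ ℝ with θ ≠ 0. Then the minimizer over w ∈ [-1,1] of E(w) = ((1+μ)/2)·w² - w·θ - μ(1+α)·|w| is w* = clamp((θ + μ(1+α)·sgn(θ))/(1+μ), -1, 1). -/
private lemma clamp_neg (x : ℝ) : max (-1) (min 1 (-x)) = -(max (-1) (min 1 x)) := by
  rcases le_total x 1 with h1 | h1 <;> rcases le_total x (-1) with h2 | h2 <;>
    simp [max_def, min_def] <;> split_ifs <;> linarith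

private lemma key_pos (μ b θ s : ℝ) (hμ : 0 < μ) (hb : 0 ≤ b) (hθ : 0 < θ)
    (hs : s = max (-1) (min 1 ((θ + b) / (1 + μ)))) :
    ∀ w ∈ Set.Icc (-1 : ℝ) 1, w ≠ s →
      ((1 + μ) / 2) * s ^ 2 - s * θ - b * |s| <
        ((1 + μ) / 2) * w ^ 2 - w * θ - b * |w| := by
  have h1 : (0 : ℝ) < 1 + μ := by linarith
  have hc : 0 < (θ + b) / (1 + μ) := div_pos (by linarith) h1
  have hsmin : s = min 1 ((θ + b) / (1 + μ)) := by
    rw [hs]; exact max_eq_right (le_min (by norm_num) (by linarith))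
  have hspos : 0 < s := hsmin ▸ lt_min one_pos hc
  have hsle : s ≤ 1 := hsmin ▸ min_le_left _ _
  have habs_s : |s| = s := abs_of_pos hspos
  have hkey : ∀ w : ℝ, 0 ≤ w → w ≤ 1 → w ≠ s →
      ((1 + μ) / 2) * s ^ 2 - s * (θ + b) < ((1 + μ) / 2) * w ^ 2 - w * (θ + b) := by
    intro w hw0 hw1 hws
    rcases le_or_gt ((θ + b) / (1 + μ)) 1 with h | h
    · have hse : s = (θ + b) / (1 + μ) := hsmin ▸ min_eq_right h
      have hseq : (1 + μ) * s = θ + b := by rw [hse]; field_simp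
      have hne : w - s ≠ 0 := sub_ne_zero.mpr hws
      have hsq : 0 < (w - s) ^ 2 := by positivity
      nlinarith [mul_pos h1 hsq]
    · have hse : s = 1 := hsmin ▸ min_eq_left h.le
      have hlt : (1 + μ) < θ + b := by
        rw [lt_div_iff₀ h1] at h; linarith
      have hw1' : w < 1 := lt_of_le_of_ne hw1 (by rw [← hse]; exact hws)
      have hprod : 0 < (1 - w) * ((θ + b) - (1 + μ) * (1 + w) / 2) := by
        apply mul_pos (by linarith)
        nlinarith
      rw [hse]
      nlinarith [hprod]
  intro w hw hws
  rcases le_or_gt 0 w with hw0 | hw0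
  · have h := hkey w hw0 hw.2 hws
    rw [abs_of_nonneg hw0, habs_s]
    nlinarith [h]
  · have hEneg : ((1 + μ) / 2) * s ^ 2 - s * (θ + b) ≤
        ((1 + μ) / 2) * (-w) ^ 2 - (-w) * (θ + b) := by
      rcases eq_or_ne (-w) s with h | h
      · rw [h]
      · exact (hkey (-w) (by linarith) (by linarith [hw.1]) h).le
    rw [abs_of_neg hw0, habs_s]
    nlinarith [hEneg, mul_pos hθ (neg_pos.mpr hw0)]

/-- Closed-form forward mapping for the paper's W-shaped inner objective:
the minimizer over `w ∈ [-1,1]` of `((1+μ)/2)w² - wθ - μ(1+α)|w|` is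
`clamp((θ + μ(1+α)·sgn θ)/(1+μ), -1, 1)`. -/
theorem stmt3 (μ α θ : ℝ) (hμ : 0 < μ) (hα : α ∈ Set.Ioo (0 : ℝ) 1) (hθ : θ ≠ 0) :
    let E : ℝ → ℝ := fun w => ((1 + μ) / 2) * w ^ 2 - w * θ - μ * (1 + α) * |w|
    let wstar : ℝ := max (-1) (min 1 ((θ + μ * (1 + α) * Real.sign θ) / (1 + μ)))
    wstar ∈ Set.Icc (-1 : ℝ) 1 ∧
    ∀ w ∈ Set.Icc (-1 : ℝ) 1, E wstar ≤ E w ∧ (E w = E wstar → w = wstar) := by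
  intro E wstar
  have hb0 : 0 ≤ μ * (1 + α) := by nlinarith [hα.1]
  have hmem : wstar ∈ Set.Icc (-1 : ℝ) 1 :=
    ⟨le_max_left _ _, max_le (by norm_num) (min_le_left _ _)⟩
  refine ⟨hmem, ?_⟩
  have hstrict : ∀ w ∈ Set.Icc (-1 : ℝ) 1, w ≠ wstar → E wstar < E w := by
    rcases hθ.lt_or_gt with hneg | hpos
    · -- θ < 0
      have hsign : Real.sign θ = -1 := Real.sign_of_neg hneg
      have hws : wstar = -(max (-1) (min 1 ((-θ + μ * (1 + α)) / (1 + μ)))) := by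
        show max (-1) (min 1 ((θ + μ * (1 + α) * Real.sign θ) / (1 + μ))) = _
        rw [hsign, ← clamp_neg]
        ring_nf
      have hk := key_pos μ (μ * (1 + α)) (-θ) (-wstar) hμ hb0 (by linarith)
        (by rw [hws]; ring)
      intro w hw hwne
      have h := hk (-w) ⟨by linarith [hw.2], by linarith [hw.1]⟩
        (fun h => hwne (by linarith [neg_injective h]))
      have hE : ∀ v : ℝ, E v =
          ((1 + μ) / 2) * (-v) ^ 2 - (-v) * (-θ) - μ * (1 + α) * |(-v)| := by
        intro v; simp only [E, abs_neg]; ring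
      rw [hE w, hE wstar]
      exact h
    · -- θ > 0
      have hsign : Real.sign θ = 1 := Real.sign_of_pos hpos
      have hk := key_pos μ (μ * (1 + α)) θ wstar hμ hb0 hpos
        (by show max (-1) (min 1 ((θ + μ * (1 + α) * Real.sign θ) / (1 + μ))) = _
            rw [hsign, mul_one])
      intro w hw hwne
      exact hk w hw hwne
  intro w hw
  rcases eq_or_ne w wstar with h | h
  · exact ⟨le_of_eq (by rw [h]), fun _ => h⟩
  · have := hstrict w hw h
    exact ⟨this.le, fun heq => absurd heq (by linarith)⟩
end

section
/- Let μ > 0 and α ∈ (0,1) with μ·α ≥ 1. Then for every θ ∈ ℝ with θ ≠ 0, the mapping s(θ) = clamp((θ + μ(1+α)·sgn(θ))/(1+μ), -1, 1) satisfies s(θ) = sgn(θ); in particular s(θ) ∈ {-1, +1}. -/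
/-- For `μα ≥ 1`, the forward mapping `s(θ) = clamp((θ + μ(1+α)·sgn θ)/(1+μ), -1, 1)`
produces strictly binary values, coinciding with `sgn θ`. -/
theorem stmt4 (μ α : ℝ) (hμ : 0 < μ) (hα : α ∈ Set.Ioo (0 : ℝ) 1) (hμα : 1 ≤ μ * α) :
    ∀ θ : ℝ, θ ≠ 0 →
      max (-1) (min 1 ((θ + μ * (1 + α) * Real.sign θ) / (1 + μ))) = Real.sign θ ∧
      (max (-1) (min 1 ((θ + μ * (1 + α) * Real.sign θ) / (1 + μ))) = -1 ∨
       max (-1) (min 1 ((θ + μ * (1 + α) * Real.sign θ) / (1 + μ))) = 1) := by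
  intro θ hθ
  have hd : (0:ℝ) < 1 + μ := by linarith
  rcases lt_or_gt_of_ne hθ with h | h
  · have hs : Real.sign θ = -1 := Real.sign_of_neg h
    rw [hs]
    have hle : (θ + μ * (1 + α) * (-1)) / (1 + μ) ≤ -1 := by
      rw [div_le_iff₀ hd]; nlinarith
    have : min 1 ((θ + μ * (1 + α) * (-1)) / (1 + μ)) ≤ -1 :=
      le_trans (min_le_right _ _) hle
    have hmax : max (-1:ℝ) (min 1 ((θ + μ * (1 + α) * (-1)) / (1 + μ))) = -1 :=
      max_eq_left this
    exact ⟨hmax, Or.inl hmax⟩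
  · have hs : Real.sign θ = 1 := Real.sign_of_pos h
    rw [hs]
    have hge : (1:ℝ) ≤ (θ + μ * (1 + α) * 1) / (1 + μ) := by
      rw [le_div_iff₀ hd]; nlinarith
    have hmin : min 1 ((θ + μ * (1 + α) * 1) / (1 + μ)) = 1 := min_eq_left hge
    rw [hmin]
    have hmax : max (-1:ℝ) (1:ℝ) = 1 := by norm_num
    exact ⟨hmax, Or.inr hmax⟩
end
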